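/- arXiv:cs/0304020 — 4 statements merged into one kernel-verified Lean document; each statement's English description precedes it below -/
import Mathlib

section
/- Let P and Q be probability distributions on the finite set [k] = {1,…,k} with relative entropy S(P‖Q) = a < ∞, and let r ≥ 1 be a real number. Then the set Good := {i ∈ [k] : P(i)·2^{-r(a+1)} ≤ Q(i)} satisfies P(Good) ≥ 1 − 1/r. -/
lemma log_le_div_e {x : ℝ} (hx : 0 < x) : Real.log x ≤ x / Real.exp 1 := by
  have h := Real.log_le_sub_one_of_pos (div_pos hx (Real.exp_pos 1))
  rw [Real.log_div (ne_of_gt hx) (ne_of_gt (Real.exp_pos 1)), Real.log_exp] at h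
  linarith

/-- **Substate theorem, part (a).**  `P` and `Q` are probability distributions on
`[k] = Fin k` with relative entropy `S(P‖Q) = a < ∞` (finiteness is expressed by
absolute continuity: `Q i = 0 → P i = 0`), and `r ≥ 1`.  Then the set
`Good = {i : P i · 2^{-r(a+1)} ≤ Q i}` has probability at least `1 - 1/r` under `P`. -/
theorem substate_good_set {k : ℕ} (P Q : Fin k → ℝ)
    (hP0 : ∀ i, 0 ≤ P i) (hP1 : ∑ i, P i = 1)
    (hQ0 : ∀ i, 0 ≤ Q i) (hQ1 : ∑ i, Q i = 1)
    (hfin : ∀ i, Q i = 0 → P i = 0)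
    (a : ℝ) (ha : a = ∑ i, P i * Real.logb 2 (P i / Q i))
    (r : ℝ) (hr : 1 ≤ r) :
    1 - 1 / r ≤
      ∑ i ∈ Finset.univ.filter (fun i => P i * (2 : ℝ) ^ (-(r * (a + 1))) ≤ Q i), P i := by
  set R := r * (a + 1) with hR
  have hL : (0:ℝ) < Real.log 2 := Real.log_pos (by norm_num)
  have he : (0:ℝ) < Real.exp 1 := Real.exp_pos 1
  -- pointwise Gibbs
  have key1 : ∀ i, P i - Q i ≤ P i * Real.log (P i / Q i) := by
    intro i
    rcases eq_or_lt_of_le (hP0 i) with h | hPi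
    · rw [← h]; simp; exact hQ0 i
    · have hQi : 0 < Q i := lt_of_le_of_ne (hQ0 i)
        (fun h => by have := hfin i h.symm; linarith)
      have h1 := Real.log_le_sub_one_of_pos (div_pos hQi hPi)
      have hlog : Real.log (P i / Q i) = - Real.log (Q i / P i) := by
        rw [← Real.log_inv]; congr 1; field_simp
      have h2 : P i * Real.log (Q i / P i) ≤ P i * (Q i / P i - 1) :=
        mul_le_mul_of_nonneg_left h1 hPi.le
      have h3 : P i * (Q i / P i - 1) = Q i - P i := by field_simp
      rw [hlog]; linarith
  have key2 : ∀ i, -(Q i / Real.exp 1) ≤ P i * Real.log (P i / Q i) := by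
    intro i
    rcases eq_or_lt_of_le (hP0 i) with h | hPi
    · rw [← h]; simp
      exact div_nonneg (hQ0 i) he.le
    · have hQi : 0 < Q i := lt_of_le_of_ne (hQ0 i)
        (fun h => by have := hfin i h.symm; linarith)
      have h1 := log_le_div_e (div_pos hQi hPi)
      have hlog : Real.log (P i / Q i) = - Real.log (Q i / P i) := by
        rw [← Real.log_inv]; congr 1; field_simp
      have h2 : P i * Real.log (Q i / P i) ≤ P i * (Q i / P i / Real.exp 1) :=
        mul_le_mul_of_nonneg_left h1 hPi.le
      have h3 : P i * (Q i / P i / Real.exp 1) = Q i / Real.exp 1 := by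
        field_simp
      rw [hlog]; linarith
  -- Bad set pointwise
  have key3 : ∀ i, ¬ (P i * (2 : ℝ) ^ (-R) ≤ Q i) →
      P i * (R * Real.log 2) ≤ P i * Real.log (P i / Q i) := by
    intro i hi
    push_neg at hi
    have hpow : (0:ℝ) < (2:ℝ) ^ (-R) := Real.rpow_pos_of_pos (by norm_num) _
    have hPi : 0 < P i := by
      rcases eq_or_lt_of_le (hP0 i) with h | h
      · exfalso; rw [← h] at hi; simp at hi; exact absurd (hQ0 i) (not_le.mpr hi)
      · exact h
    have hQi : 0 < Q i := lt_of_le_of_ne (hQ0 i)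
      (fun h => by have := hfin i h.symm; linarith)
    have hratio : (2:ℝ) ^ R ≤ P i / Q i := by
      rw [le_div_iff₀ hQi]
      have : Q i * (2:ℝ) ^ R < P i * (2:ℝ) ^ (-R) * (2:ℝ) ^ R :=
        mul_lt_mul_of_pos_right hi (Real.rpow_pos_of_pos (by norm_num) _)
      calc (2:ℝ) ^ R * Q i = Q i * (2:ℝ) ^ R := by ring
        _ ≤ P i * (2:ℝ) ^ (-R) * (2:ℝ) ^ R := this.le
        _ = P i := by
            rw [mul_assoc, ← Real.rpow_add (by norm_num : (0:ℝ) < 2)]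
            simp
    have hlog : R * Real.log 2 ≤ Real.log (P i / Q i) := by
      have := Real.log_le_log (Real.rpow_pos_of_pos (by norm_num) R) hratio
      rwa [Real.log_rpow (by norm_num : (0:ℝ) < 2)] at this
    exact mul_le_mul_of_nonneg_left hlog (hP0 i)
  -- rewrite a in natural log
  have haL : a * Real.log 2 = ∑ i, P i * Real.log (P i / Q i) := by
    rw [ha, Finset.sum_mul]
    apply Finset.sum_congr rfl
    intro i _
    rw [Real.logb]
    field_simp
  have ha0 : 0 ≤ a := by
    have h1 : (0:ℝ) ≤ a * Real.log 2 := by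
      rw [haL]
      have : ∑ i, (P i - Q i) ≤ ∑ i, P i * Real.log (P i / Q i) :=
        Finset.sum_le_sum (fun i _ => key1 i)
      rw [Finset.sum_sub_distrib, hP1, hQ1] at this
      linarith
    nlinarith
  set Good := Finset.univ.filter (fun i => P i * (2 : ℝ) ^ (-R) ≤ Q i) with hGood
  set Bad := Finset.univ.filter (fun i => ¬ (P i * (2 : ℝ) ^ (-R) ≤ Q i)) with hBad
  have hsplit : ∑ i ∈ Good, P i + ∑ i ∈ Bad, P i = 1 := by
    rw [hGood, hBad, Finset.sum_filter_add_sum_filter_not]; exact hP1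
  have hsplit2 : a * Real.log 2 =
      (∑ i ∈ Good, P i * Real.log (P i / Q i)) + ∑ i ∈ Bad, P i * Real.log (P i / Q i) := by
    rw [haL, hGood, hBad, Finset.sum_filter_add_sum_filter_not]
  set b := ∑ i ∈ Bad, P i with hb
  have hb0 : 0 ≤ b := Finset.sum_nonneg (fun i _ => hP0 i)
  have hBsum : b * (R * Real.log 2) ≤ ∑ i ∈ Bad, P i * Real.log (P i / Q i) := by
    rw [hb, Finset.sum_mul]
    apply Finset.sum_le_sum
    intro i hi
    rw [hBad, Finset.mem_filter] at hi
    exact key3 i hi.2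
  have hGsum : -(1 / Real.exp 1) ≤ ∑ i ∈ Good, P i * Real.log (P i / Q i) := by
    have h1 : ∑ i ∈ Good, -(Q i / Real.exp 1) ≤ ∑ i ∈ Good, P i * Real.log (P i / Q i) :=
      Finset.sum_le_sum (fun i _ => key2 i)
    have h2 : ∑ i ∈ Good, Q i ≤ 1 := by
      rw [← hQ1]
      exact Finset.sum_le_sum_of_subset_of_nonneg (Finset.filter_subset _ _)
        (fun i _ _ => hQ0 i)
    have h3 : ∑ i ∈ Good, -(Q i / Real.exp 1) = -((∑ i ∈ Good, Q i) / Real.exp 1) := by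
      rw [Finset.sum_div]
      exact Finset.sum_neg_distrib _
    rw [h3] at h1
    have h4 : (∑ i ∈ Good, Q i) / Real.exp 1 ≤ 1 / Real.exp 1 := by gcongr
    linarith
  have hinve : 1 / Real.exp 1 ≤ Real.log 2 := by
    have h1 : (2.7182818283 : ℝ) < Real.exp 1 := Real.exp_one_gt_d9
    have h2 : (0.6931471803 : ℝ) < Real.log 2 := Real.log_two_gt_d9
    rw [div_le_iff₀ he]
    nlinarith
  -- combine
  have hmain : b * (R * Real.log 2) ≤ a * Real.log 2 + 1 / Real.exp 1 := by
    linarith [hsplit2, hBsum, hGsum]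
  have hbound : b * r ≤ 1 := by
    have hX : 0 < (a + 1) * Real.log 2 := by positivity
    have h4 : b * r * ((a + 1) * Real.log 2) ≤ 1 * ((a + 1) * Real.log 2) := by
      rw [hR] at hmain
      nlinarith
    exact le_of_mul_le_mul_right (by linarith) hX
  have hrpos : 0 < r := lt_of_lt_of_le one_pos hr
  have : b ≤ 1 / r := by
    rw [le_div_iff₀ hrpos]; linarith [hbound]
  linarith [hsplit, this]
end

section
/- Let P and Q be probability distributions on the finite set [k] = {1,…,k} with relative entropy S(P‖Q) = a < ∞, and let r ≥ 1 be a real number. Then there exists a probability distribution P̃ on [k] such that ‖P − P̃‖₁ ≤ 2/r and α·P̃(i) ≤ Q(i) for all i ∈ [k], where α := ((r−1)/r)·2^{-r(a+1)}. -/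
/-- `log x ≤ x / e` for `x > 0`. -/
lemma substate_log_le (x : ℝ) (hx : 0 < x) : Real.log x ≤ x / Real.exp 1 := by
  have h := Real.log_le_sub_one_of_pos (show (0:ℝ) < x / Real.exp 1 by positivity)
  rw [Real.log_div hx.ne' (Real.exp_pos 1).ne', Real.log_exp] at h
  linarith

/-- Pointwise Gibbs bound: `(p - q)/log 2 ≤ p * logb 2 (p/q)`. -/
lemma substate_gibbs_pt (p q : ℝ) (hp : 0 ≤ p) (hq : 0 ≤ q) (h : q = 0 → p = 0) :
    (p - q) / Real.log 2 ≤ p * Real.logb 2 (p / q) := by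
  have hl2 : 0 < Real.log 2 := Real.log_pos one_lt_two
  rcases hp.eq_or_lt with h0 | hp'
  · rw [← h0]; simp
    exact div_nonpos_of_nonpos_of_nonneg (by linarith) hl2.le
  rcases hq.eq_or_lt with h0 | hq'
  · exact absurd (h h0.symm) hp'.ne'
  have hlog : Real.log (q / p) ≤ q / p - 1 := Real.log_le_sub_one_of_pos (by positivity)
  have h1 : p * Real.log (q / p) ≤ q - p := by
    have h2 := mul_le_mul_of_nonneg_left hlog hp
    have h3 : p * (q / p - 1) = q - p := by field_simp
    linarith [h3 ▸ h2]
  have h2 : Real.log (q / p) = - Real.log (p / q) := by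
    rw [Real.log_div hq'.ne' hp'.ne', Real.log_div hp'.ne' hq'.ne']; ring
  have h3 : p - q ≤ p * Real.log (p / q) := by
    rw [h2, mul_neg] at h1; linarith
  rw [Real.logb, ← mul_div_assoc]
  exact (div_le_div_iff_of_pos_right hl2).mpr h3

/-- Pointwise lower bound: `p * logb 2 (p/q) ≥ -q/(e·log 2)`. -/
lemma substate_neg_pt (p q : ℝ) (hp : 0 ≤ p) (hq : 0 ≤ q) (h : q = 0 → p = 0) :
    -(q / (Real.exp 1 * Real.log 2)) ≤ p * Real.logb 2 (p / q) := by
  have hl2 : 0 < Real.log 2 := Real.log_pos one_lt_two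
  have he : (0:ℝ) < Real.exp 1 := Real.exp_pos 1
  rcases hp.eq_or_lt with h0 | hp'
  · rw [← h0]; simp
    positivity
  rcases hq.eq_or_lt with h0 | hq'
  · exact absurd (h h0.symm) hp'.ne'
  have hlog : Real.log (q / p) ≤ (q / p) / Real.exp 1 :=
    substate_log_le _ (by positivity)
  have h1 : p * Real.log (q / p) ≤ q / Real.exp 1 := by
    have h2 := mul_le_mul_of_nonneg_left hlog hp
    have h3 : p * (q / p / Real.exp 1) = q / Real.exp 1 := by
      field_simp
    linarith [h3 ▸ h2]
  have h2 : Real.log (q / p) = - Real.log (p / q) := by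
    rw [Real.log_div hq'.ne' hp'.ne', Real.log_div hp'.ne' hq'.ne']; ring
  have h3 : -(q / Real.exp 1) ≤ p * Real.log (p / q) := by
    rw [h2, mul_neg] at h1; linarith
  rw [Real.logb, ← mul_div_assoc,
    show -(q / (Real.exp 1 * Real.log 2)) = (-(q / Real.exp 1)) / Real.log 2 by ring]
  exact (div_le_div_iff_of_pos_right hl2).mpr h3

/-- **Substate theorem, part (b).**  `P` and `Q` are probability distributions on
`[k] = Fin k` with relative entropy `S(P‖Q) = a < ∞` (finiteness is expressed by
absolute continuity: `Q i = 0 → P i = 0`), and `r ≥ 1`.  Then there is a probability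
distribution `P̃` on `[k]` with `‖P − P̃‖₁ ≤ 2/r` and `α·P̃ ≤ Q` pointwise, where
`α = ((r−1)/r)·2^{-r(a+1)}`. -/
theorem substate_substate {k : ℕ} (P Q : Fin k → ℝ)
    (hP0 : ∀ i, 0 ≤ P i) (hP1 : ∑ i, P i = 1)
    (hQ0 : ∀ i, 0 ≤ Q i) (hQ1 : ∑ i, Q i = 1)
    (hfin : ∀ i, Q i = 0 → P i = 0)
    (a : ℝ) (ha : a = ∑ i, P i * Real.logb 2 (P i / Q i))
    (r : ℝ) (hr : 1 ≤ r) :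
    ∃ Pt : Fin k → ℝ, (∀ i, 0 ≤ Pt i) ∧ (∑ i, Pt i = 1) ∧
      (∑ i, |P i - Pt i|) ≤ 2 / r ∧
      ∀ i, (r - 1) / r * (2 : ℝ) ^ (-(r * (a + 1))) * Pt i ≤ Q i := by
  have hl2 : 0 < Real.log 2 := Real.log_pos one_lt_two
  -- r = 1 case
  rcases eq_or_lt_of_le hr with hr1 | hr1
  · refine ⟨P, hP0, hP1, ?_, ?_⟩
    · simp [← hr1]
    · intro i
      rw [← hr1]
      simpa using hQ0 i
  have hr0 : (0:ℝ) < r := by linarith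
  -- Gibbs: 0 ≤ a
  have hGibbs : 0 ≤ a := by
    rw [ha]
    have key : ∀ i ∈ Finset.univ, (P i - Q i) / Real.log 2 ≤ P i * Real.logb 2 (P i / Q i) :=
      fun i _ => substate_gibbs_pt _ _ (hP0 i) (hQ0 i) (hfin i)
    have h6 := Finset.sum_le_sum key
    have hsum : ∑ i, (P i - Q i) / Real.log 2 = 0 := by
      rw [← Finset.sum_div, Finset.sum_sub_distrib, hP1, hQ1]; simp
    linarith
  set c : ℝ := r * (a + 1) with hc_def
  have hc : 0 < c := by positivity
  set bad : Fin k → Prop := fun i => (2:ℝ) ^ c * Q i < P i with hbad_def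
  have hdec : DecidablePred bad := fun i => Real.decidableLT _ _
  set B : Finset (Fin k) := Finset.univ.filter bad with hB
  set G : Finset (Fin k) := Finset.univ.filter (fun i => ¬ bad i) with hG
  set p : ℝ := ∑ i ∈ B, P i with hp_def
  set q : ℝ := ∑ i ∈ G, P i with hq_def
  have hpq : p + q = 1 := by
    rw [hp_def, hq_def, Finset.sum_filter_add_sum_filter_not, hP1]
  have hp0 : 0 ≤ p := Finset.sum_nonneg fun i _ => hP0 i
  have hq0 : 0 ≤ q := Finset.sum_nonneg fun i _ => hP0 i
  -- on the bad set, the log-ratio is at least c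
  have hbadQ : ∀ i ∈ B, 0 < Q i := by
    intro i hi
    rw [hB, Finset.mem_filter] at hi
    rcases (hQ0 i).eq_or_lt with h0 | h0
    · exfalso
      have hPi := hfin i h0.symm
      have h7 := hi.2
      rw [hbad_def] at h7
      simp only [← h0, mul_zero] at h7
      linarith
    · exact h0
  have hbad_lb : ∀ i ∈ B, P i * c ≤ P i * Real.logb 2 (P i / Q i) := by
    intro i hi
    have hQi := hbadQ i hi
    rw [hB, Finset.mem_filter] at hi
    have hlt : (2:ℝ) ^ c * Q i < P i := hi.2
    have hPi : 0 < P i := lt_of_le_of_lt (by positivity) hlt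
    have hratio : (2:ℝ) ^ c ≤ P i / Q i := by
      rw [le_div_iff₀ hQi]; linarith
    have hlog : c ≤ Real.logb 2 (P i / Q i) :=
      (Real.le_logb_iff_rpow_le one_lt_two (by positivity)).mpr hratio
    exact mul_le_mul_of_nonneg_left hlog (hP0 i)
  -- negative part bound on the good set
  have hneg : -1 ≤ ∑ i ∈ G, P i * Real.logb 2 (P i / Q i) := by
    have key : ∀ i ∈ G, -(Q i / (Real.exp 1 * Real.log 2)) ≤ P i * Real.logb 2 (P i / Q i) :=
      fun i _ => substate_neg_pt _ _ (hP0 i) (hQ0 i) (hfin i)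
    have h1 := Finset.sum_le_sum key
    have h2 : ∑ i ∈ G, -(Q i / (Real.exp 1 * Real.log 2))
        = -((∑ i ∈ G, Q i) / (Real.exp 1 * Real.log 2)) := by
      rw [Finset.sum_neg_distrib, ← Finset.sum_div]
    have hQG : ∑ i ∈ G, Q i ≤ 1 := by
      rw [← hQ1]
      exact Finset.sum_le_sum_of_subset_of_nonneg (Finset.subset_univ _)
        (fun i _ _ => hQ0 i)
    have hel : 1 ≤ Real.exp 1 * Real.log 2 := by
      nlinarith [Real.exp_one_gt_d9, Real.log_two_gt_d9]
    have h3 : -1 ≤ -((∑ i ∈ G, Q i) / (Real.exp 1 * Real.log 2)) := by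
      have hpos : 0 < Real.exp 1 * Real.log 2 := by positivity
      rw [neg_le_neg_iff, div_le_one hpos]
      linarith
    linarith [h2 ▸ h1]
  -- Markov: c * p ≤ a + 1
  have hsplit : a = (∑ i ∈ B, P i * Real.logb 2 (P i / Q i))
      + ∑ i ∈ G, P i * Real.logb 2 (P i / Q i) := by
    rw [ha, hB, hG, Finset.sum_filter_add_sum_filter_not]
  have hBsum : p * c ≤ ∑ i ∈ B, P i * Real.logb 2 (P i / Q i) := by
    rw [hp_def, Finset.sum_mul]
    exact Finset.sum_le_sum hbad_lb
  have hmarkov : p * c ≤ a + 1 := by linarith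
  have hp1r : p ≤ 1 / r := by
    rw [le_div_iff₀ hr0]
    nlinarith [hmarkov]
  have hq_lb : (r - 1) / r ≤ q := by
    have h8 : 1 - 1 / r ≤ q := by linarith
    have h4 : (r - 1) / r = 1 - 1 / r := by field_simp
    linarith [h4 ▸ h8]
  have hq_pos : 0 < q := by
    have h9 : (0:ℝ) < (r - 1) / r := div_pos (by linarith) hr0
    linarith
  have hq_le1 : q ≤ 1 := by linarith
  -- define Pt
  refine ⟨fun i => if bad i then 0 else P i / q, ?_, ?_, ?_, ?_⟩
  · intro i
    by_cases h : bad i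
    · simp [h]
    · simp only [h, if_false]
      exact div_nonneg (hP0 i) hq0
  · rw [Finset.sum_ite, ← hB]
    have hGg : Finset.univ.filter (fun i => ¬ bad i) = G := rfl
    rw [hGg]
    simp only [Finset.sum_const, smul_zero, zero_add]
    rw [← Finset.sum_div, ← hq_def, div_self hq_pos.ne']
  · have hterm : ∀ i, |P i - (if bad i then 0 else P i / q)|
        = if bad i then P i else P i / q - P i := by
      intro i
      by_cases h : bad i
      · simp only [h, if_true, sub_zero]
        exact abs_of_nonneg (hP0 i)
      · simp only [h, if_false]
        rw [abs_sub_comm]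
        apply abs_of_nonneg
        have h10 : P i ≤ P i / q := by
          rw [le_div_iff₀ hq_pos]
          nlinarith [hP0 i]
        linarith
    simp only [hterm]
    rw [Finset.sum_ite, ← hB]
    have hGg : Finset.univ.filter (fun i => ¬ bad i) = G := rfl
    rw [hGg, ← hp_def]
    have h5 : ∑ i ∈ G, (P i / q - P i) = 1 - q := by
      rw [Finset.sum_sub_distrib, ← Finset.sum_div, ← hq_def, div_self hq_pos.ne']
    rw [h5]
    have h11 : 1 - q = p := by linarith
    rw [h11]
    calc p + p ≤ 1/r + 1/r := by linarith
      _ = 2 / r := by ring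
  · intro i
    by_cases h : bad i
    · simp [h, hQ0 i]
    · simp only [h, if_false]
      have hPle : P i ≤ (2:ℝ) ^ c * Q i := not_lt.mp h
      set t : ℝ := (2:ℝ) ^ c with ht_def
      have ht : 0 < t := by positivity
      have hneg_pow : (2:ℝ) ^ (-(r * (a + 1))) = t⁻¹ := by
        rw [ht_def, hc_def, ← Real.rpow_neg (by norm_num : (0:ℝ) ≤ 2)]
      rw [hneg_pow]
      have hs0 : 0 ≤ (r - 1) / r := div_nonneg (by linarith) hr0.le
      have key : (r - 1) / r * P i ≤ q * (t * Q i) :=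
        mul_le_mul hq_lb hPle (hP0 i) hq0
      have htq : 0 < t * q := mul_pos ht hq_pos
      have h6 : (r - 1) / r * t⁻¹ * (P i / q) * (t * q) = (r - 1) / r * P i := by
        field_simp
      rw [← mul_le_mul_iff_of_pos_right htq, h6]
      linarith [key]
end

section
/- Let P and Q be probability distributions on the finite set [k] = {1,…,k} such that 2^{-a}·P(i) ≤ Q(i) for all i ∈ [k]. Then for each integer t ≥ 1 there exist correlated random variables X = ⟨X_1,…,X_t⟩ and Y = ⟨Y_1,…,Y_R⟩ (with random length R) such that: (a) X_1,…,X_t are independent, each with distribution Q; (b) R has the binomial distribution B(t, 2^{-a}); (c) conditioned on the event R = r, the random variables Y_1,…,Y_r are independent, each with distribution P; and (d) with probability 1, Y is a subsequence of X. -/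
open Finset in
private lemma corr_aux {t k : ℕ} (w : Fin t → Fin k → ℝ) (S : Finset (Fin t)) (g : Fin t → Fin k) :
    ∑ x : Fin t → Fin k, (if ∀ i ∈ S, x i = g i then ∏ i, w i (x i) else 0)
      = (∏ i ∈ S, w i (g i)) * ∏ i ∈ Sᶜ, (∑ v, w i v) := by
  classical
  have h1 : ∏ i, ∑ v ∈ (if i ∈ S then ({g i} : Finset (Fin k)) else Finset.univ), w i v
      = ∑ x ∈ Fintype.piFinset (fun i => if i ∈ S then ({g i} : Finset (Fin k)) else Finset.univ),
          ∏ i, w i (x i) :=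
    Finset.prod_univ_sum _ _
  have h2 : Fintype.piFinset (fun i => if i ∈ S then ({g i} : Finset (Fin k)) else Finset.univ)
      = Finset.univ.filter (fun x => ∀ i ∈ S, x i = g i) := by
    ext x
    simp only [Fintype.mem_piFinset, Finset.mem_filter, Finset.mem_univ, true_and]
    constructor
    · intro h i hi
      have := h i
      simpa [hi] using this
    · intro h i
      by_cases hi : i ∈ S <;> simp [hi, h]
  rw [h2] at h1
  rw [← Finset.sum_filter, ← h1]
  rw [show (∏ i, ∑ v ∈ (if i ∈ S then ({g i} : Finset (Fin k)) else Finset.univ), w i v)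
      = ∏ i, (if i ∈ S then w i (g i) else ∑ v, w i v) from by
    apply Finset.prod_congr rfl; intro i _; by_cases hi : i ∈ S <;> simp [hi]]
  rw [Finset.prod_ite]
  congr 1
  · exact Finset.prod_congr (by simp) (fun _ _ => rfl)
  · exact Finset.prod_congr (by ext i; simp) (fun _ _ => rfl)

private lemma corr_exists_g {ι α : Type*} [DecidableEq ι] [Inhabited α] :
    ∀ (l : List ι), l.Nodup → ∀ ys : List α, ys.length = l.length → ∃ g : ι → α, l.map g = ys := by
  intro l
  induction l with
  | nil =>
    intro _ ys h
    simp only [List.length_nil, List.length_eq_zero_iff] at h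
    exact ⟨fun _ => default, by simp [h]⟩
  | cons a l ih =>
    intro hl ys h
    match ys with
    | y :: ys' =>
      obtain ⟨g', hg'⟩ := ih hl.of_cons ys' (by simpa using h)
      refine ⟨Function.update g' a y, ?_⟩
      simp only [List.map_cons, Function.update_self]
      congr 1
      rw [← hg']
      apply List.map_congr_left
      intro i hi
      exact Function.update_of_ne (by rintro rfl; exact hl.notMem hi) _ _

private lemma corr_toFinset {t : ℕ} (b : Fin t → Bool) :
    ((List.finRange t).filter b).toFinset = Finset.univ.filter (fun i => b i = true) := by
  ext i; simp

private lemma corr_len {t : ℕ} (b : Fin t → Bool) :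
    ((List.finRange t).filter b).length = (Finset.univ.filter (fun i => b i = true)).card := by
  rw [← corr_toFinset, List.toFinset_card_of_nodup ((List.nodup_finRange t).filter _)]

private lemma corr_count {t r : ℕ} :
    (Finset.univ.filter (fun b : Fin t → Bool =>
      (Finset.univ.filter (fun i => b i = true)).card = r)).card = t.choose r := by
  have : (Finset.univ.filter (fun b : Fin t → Bool =>
      (Finset.univ.filter (fun i => b i = true)).card = r)).card
      = (Finset.powersetCard r (Finset.univ : Finset (Fin t))).card := by
    apply Finset.card_bij (fun b _ => Finset.univ.filter (fun i => b i = true))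
    · intro b hb
      simp only [Finset.mem_filter] at hb
      simp [Finset.mem_powersetCard, hb.2]
    · intro b1 h1 b2 h2 h
      funext i
      have := Finset.ext_iff.mp h i
      simp only [Finset.mem_filter, Finset.mem_univ, true_and] at this
      cases hb : b1 i <;> cases hb2 : b2 i <;> simp_all
    · intro S hS
      simp only [Finset.mem_powersetCard_univ] at hS
      refine ⟨fun i => i ∈ S, by simpa using hS, ?_⟩
      ext i; simp
  rw [this, Finset.card_powersetCard, Finset.card_univ, Fintype.card_fin]

/-- **Correlated sampling (Lemma 3).**  If `P, Q` are probability distributions on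
`[k] = Fin k` with `2^{-a}·P ≤ Q` pointwise, then for each `t ≥ 1` there are
correlated random variables `X = ⟨X_1,…,X_t⟩` and `Y = ⟨Y_1,…,Y_R⟩` (on a finite
probability space `Ω` with mass function `p`, with `Y` of random length `R`) such
that: (a) the `X_i` are independent, each with distribution `Q`; (b) `R = |Y|` has
binomial distribution `B(t, 2^{-a})`; (c) conditioned on `R = r`, the entries of `Y`
are independent, each with distribution `P`; (d) with probability `1`, `Y` is a
subsequence of `X`. -/
theorem correlated_sampling {k : ℕ} (P Q : Fin k → ℝ) (a : ℝ) (ha : 0 ≤ a)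
    (hP0 : ∀ i, 0 ≤ P i) (hP1 : ∑ i, P i = 1)
    (hQ0 : ∀ i, 0 ≤ Q i) (hQ1 : ∑ i, Q i = 1)
    (hdom : ∀ i, (2 : ℝ) ^ (-a) * P i ≤ Q i)
    (t : ℕ) (ht : 1 ≤ t) :
    ∃ (Ω : Type) (_ : Fintype Ω) (_ : DecidableEq Ω) (p : Ω → ℝ)
      (X : Ω → Fin t → Fin k) (Y : Ω → List (Fin k)),
      (∀ ω, 0 ≤ p ω) ∧ (∑ ω, p ω = 1) ∧
      -- (a) X₁, …, X_t independent, each with distribution Q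
      (∀ f : Fin t → Fin k,
        ∑ ω ∈ Finset.univ.filter (fun ω => X ω = f), p ω = ∏ i, Q (f i)) ∧
      -- (b) R = |Y| has binomial distribution B(t, 2^{-a})
      (∀ r : ℕ,
        ∑ ω ∈ Finset.univ.filter (fun ω => (Y ω).length = r), p ω =
          (t.choose r : ℝ) * ((2 : ℝ) ^ (-a)) ^ r * (1 - (2 : ℝ) ^ (-a)) ^ (t - r)) ∧
      -- (c) conditioned on R = r, the Yᵢ are independent, each with distribution P
      (∀ r : ℕ, r ≤ t → ∀ ys : List (Fin k), ys.length = r →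
        ∑ ω ∈ Finset.univ.filter (fun ω => Y ω = ys), p ω =
          (∑ ω ∈ Finset.univ.filter (fun ω => (Y ω).length = r), p ω) *
            (ys.map P).prod) ∧
      -- (d) with probability 1, Y is a subsequence of X
      (∀ ω, p ω ≠ 0 → (Y ω).Sublist (List.ofFn (X ω))) := by
  classical
  -- k ≠ 0
  rcases isEmpty_or_nonempty (Fin k) with hk | hk
  · exfalso; rw [Finset.univ_eq_empty] at hP1; simp at hP1
  have : Inhabited (Fin k) := ⟨hk.some⟩
  set c : ℝ := (2 : ℝ) ^ (-a) with hc
  have hc0 : 0 ≤ c := le_of_lt (Real.rpow_pos_of_pos two_pos _)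
  set w : Bool → Fin k → ℝ := fun β v => if β then c * P v else Q v - c * P v with hw
  have hw0 : ∀ β v, 0 ≤ w β v := by
    intro β v
    cases β
    · simpa [w] using sub_nonneg.mpr (hdom v)
    · exact mul_nonneg hc0 (hP0 v)
  have hWt : ∑ v, w true v = c := by
    simp only [hw, if_true]
    rw [← Finset.mul_sum, hP1, mul_one]
  have hWf : ∑ v, w false v = 1 - c := by
    simp only [hw, if_false, Bool.false_eq_true]
    rw [Finset.sum_sub_distrib, hQ1, ← Finset.mul_sum, hP1, mul_one]
  have key1 : ∀ b : Fin t → Bool,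
      ∑ x : Fin t → Fin k, ∏ i, w (b i) (x i) = ∏ i, (if b i then c else 1 - c) := by
    intro b
    have h := Finset.prod_univ_sum (fun _ : Fin t => (Finset.univ : Finset (Fin k)))
      (fun i v => w (b i) v)
    rw [Fintype.piFinset_univ] at h
    rw [← h]
    exact Finset.prod_congr rfl fun i _ => by cases hbi : b i <;> simp [hbi, hWt, hWf]
  have key2 : ∀ b : Fin t → Bool,
      ∏ i, (if b i then c else 1 - c)
        = c ^ (Finset.univ.filter (fun i => b i = true)).card
          * (1 - c) ^ (t - (Finset.univ.filter (fun i => b i = true)).card) := by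
    intro b
    rw [Finset.prod_ite (fun _ => c) (fun _ => 1 - c), Finset.prod_const, Finset.prod_const]
    congr 2
    have h := Finset.card_filter_add_card_filter_not
      (s := (Finset.univ : Finset (Fin t))) (p := fun i => b i = true)
    rw [Finset.card_univ, Fintype.card_fin] at h
    have hle : (Finset.univ.filter (fun i => b i = true)).card ≤ t := by
      simpa using Finset.card_filter_le Finset.univ (fun i => b i = true)
    omega
  have hBsum : ∀ r : ℕ,
      (∑ b : Fin t → Bool, if (Finset.univ.filter (fun i => b i = true)).card = r
          then c ^ r * (1 - c) ^ (t - r) else 0)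
        = (t.choose r : ℝ) * c ^ r * (1 - c) ^ (t - r) := by
    intro r
    rw [← Finset.sum_filter, Finset.sum_const, corr_count, nsmul_eq_mul, mul_assoc]
  have hB : ∀ r : ℕ,
      ∑ ω ∈ Finset.univ.filter (fun ω : (Fin t → Bool) × (Fin t → Fin k) =>
          ((((List.finRange t).filter ω.1).map ω.2)).length = r), ∏ i, w (ω.1 i) (ω.2 i)
        = (t.choose r : ℝ) * c ^ r * (1 - c) ^ (t - r) := by
    intro r
    rw [Finset.sum_filter, Fintype.sum_prod_type]
    have h0 : ∀ b : Fin t → Bool,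
        (∑ x : Fin t → Fin k,
          if (((List.finRange t).filter b).map x).length = r then ∏ i, w (b i) (x i) else 0)
          = if (Finset.univ.filter (fun i => b i = true)).card = r
              then c ^ r * (1 - c) ^ (t - r) else 0 := by
      intro b
      by_cases hbr : (Finset.univ.filter (fun i => b i = true)).card = r
      · simp only [List.length_map, corr_len b, hbr, if_true]
        rw [key1, key2, hbr]
      · simp only [List.length_map, corr_len b, hbr, if_false]
        simp
    rw [Finset.sum_congr rfl fun b _ => h0 b, hBsum r]
  refine ⟨(Fin t → Bool) × (Fin t → Fin k), inferInstance, inferInstance,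
    fun ω => ∏ i, w (ω.1 i) (ω.2 i),
    fun ω => ω.2,
    fun ω => ((List.finRange t).filter ω.1).map ω.2, ?_, ?_, ?_, ?_, ?_, ?_⟩
  · intro ω; exact Finset.prod_nonneg fun i _ => hw0 _ _
  · -- total mass 1
    rw [Fintype.sum_prod_type]
    calc ∑ b : Fin t → Bool, ∑ x : Fin t → Fin k, ∏ i, w (b i) (x i)
        = ∑ b : Fin t → Bool, ∏ i, (if b i then c else 1 - c) :=
          Finset.sum_congr rfl fun b _ => key1 b
      _ = ∏ i : Fin t, ∑ β : Bool, (if β then c else 1 - c) := by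
          have h := Finset.prod_univ_sum (fun _ : Fin t => (Finset.univ : Finset Bool))
            (fun _ β => if β then c else 1 - c)
          rw [Fintype.piFinset_univ] at h
          rw [h]
      _ = 1 := by simp
  · -- (a)
    intro f
    rw [Finset.sum_filter, Fintype.sum_prod_type]
    have h0 : ∀ b : Fin t → Bool,
        (∑ x : Fin t → Fin k, if x = f then ∏ i, w (b i) (x i) else 0)
          = ∏ i, w (b i) (f i) := by
      intro b
      rw [Finset.sum_ite_eq' Finset.univ f (fun x => ∏ i, w (b i) (x i))]
      simp
    rw [Finset.sum_congr rfl fun b _ => h0 b]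
    have h := Finset.prod_univ_sum (fun _ : Fin t => (Finset.univ : Finset Bool))
      (fun i β => w β (f i))
    rw [Fintype.piFinset_univ] at h
    rw [← h]
    refine Finset.prod_congr rfl fun i _ => ?_
    rw [Fintype.sum_bool]
    simp [hw]
  · -- (b)
    exact hB
  · -- (c)
    intro r hrt ys hys
    rw [hB r, Finset.sum_filter, Fintype.sum_prod_type]
    have h0 : ∀ b : Fin t → Bool,
        (∑ x : Fin t → Fin k,
          if ((List.finRange t).filter b).map x = ys then ∏ i, w (b i) (x i) else 0)
        = (if (Finset.univ.filter (fun i => b i = true)).card = r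
            then c ^ r * (1 - c) ^ (t - r) else 0) * (ys.map P).prod := by
      intro b
      have hnd : ((List.finRange t).filter b).Nodup := (List.nodup_finRange t).filter _
      by_cases hbr : (Finset.univ.filter (fun i => b i = true)).card = r
      · obtain ⟨g, hg⟩ := corr_exists_g ((List.finRange t).filter b) hnd ys
          (by rw [hys, ← hbr, ← corr_len b])
        have hcond : ∀ x : Fin t → Fin k,
            (((List.finRange t).filter b).map x = ys)
              ↔ (∀ i ∈ Finset.univ.filter (fun i => b i = true), x i = g i) := by
          intro x
          rw [← hg]
          constructor
          · intro h i hi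
            rw [← corr_toFinset b, List.mem_toFinset] at hi
            exact List.map_eq_map_iff.mp h i hi
          · intro h
            apply List.map_congr_left
            intro i hi
            exact h i (by rw [← corr_toFinset b]; exact List.mem_toFinset.mpr hi)
        calc (∑ x : Fin t → Fin k,
              if ((List.finRange t).filter b).map x = ys then ∏ i, w (b i) (x i) else 0)
            = ∑ x : Fin t → Fin k,
              if (∀ i ∈ Finset.univ.filter (fun i => b i = true), x i = g i)
                then ∏ i, w (b i) (x i) else 0 :=
              Finset.sum_congr rfl fun x _ => by rw [if_congr (hcond x) rfl rfl]
          _ = (∏ i ∈ Finset.univ.filter (fun i => b i = true), w (b i) (g i))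
              * ∏ i ∈ (Finset.univ.filter (fun i => b i = true))ᶜ, (∑ v, w (b i) v) :=
              corr_aux (fun i v => w (b i) v) _ g
          _ = (c ^ r * (ys.map P).prod) * (1 - c) ^ (t - r) := by
              congr 1
              · rw [Finset.prod_congr rfl (fun i hi => show w (b i) (g i) = c * P (g i) from by
                    rw [Finset.mem_filter] at hi; simp [hw, hi.2]),
                  Finset.prod_mul_distrib, Finset.prod_const, hbr]
                congr 1
                rw [← corr_toFinset b, List.prod_toFinset (fun i => P (g i)) hnd]
                rw [show (((List.finRange t).filter b).map fun i => P (g i)) = ys.map P from by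
                  rw [← hg, List.map_map]; rfl]
              · rw [Finset.prod_congr rfl (fun i hi => show (∑ v, w (b i) v) = 1 - c from by
                    rw [Finset.mem_compl, Finset.mem_filter] at hi
                    have : b i = false := by
                      cases hbi : b i
                      · rfl
                      · exact absurd ⟨Finset.mem_univ i, hbi⟩ hi
                    rw [this, hWf]),
                  Finset.prod_const, Finset.card_compl, Fintype.card_fin, hbr]
          _ = (if (Finset.univ.filter (fun i => b i = true)).card = r
                then c ^ r * (1 - c) ^ (t - r) else 0) * (ys.map P).prod := by
              rw [if_pos hbr]; ring
      · have hno : ∀ x : Fin t → Fin k, ¬ (((List.finRange t).filter b).map x = ys) := by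
          intro x h
          apply hbr
          have := congrArg List.length h
          rw [List.length_map, corr_len b] at this
          rw [this, hys]
        simp [hno, hbr]
    rw [Finset.sum_congr rfl fun b _ => h0 b, ← Finset.sum_mul, hBsum r]
  · -- (d)
    intro ω _
    have h1 : List.ofFn ω.2 = (List.finRange t).map ω.2 := List.ofFn_eq_map
    rw [h1]
    exact ((List.finRange t).filter_sublist).map ω.2
end

section
/- Let w_1,…,w_d be orthonormal vectors in ℂ^m, let P be an orthogonal projection operator on ℂ^m, and let l be a positive real number. Suppose ⟨w_i, Pw_i⟩ < 4/l for every i and |⟨w_i, Pw_j⟩| < 2/(d²l) for every i ≠ j. Then every unit vector w in span(w_1,…,w_d) satisfies ⟨w, Pw⟩ < 6/l. -/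
open scoped InnerProductSpace

open Finset

/-- **Spanning step in Lemma 8.**  Let `w_1,…,w_d` be orthonormal vectors in `ℂ^m`
and let `P` be an orthogonal projection operator (a Hermitian idempotent matrix)
on `ℂ^m`, and `l > 0` a real number.  If `⟨w_i, Pw_i⟩ < 4/l` for every `i` and
`|⟨w_i, Pw_j⟩| < 2/(d²l)` for all `i ≠ j`, then every unit vector `w` in
`span(w_1,…,w_d)` satisfies `⟨w, Pw⟩ < 6/l`. -/
theorem projection_small_on_span {m d : ℕ}
    (w : Fin d → EuclideanSpace ℂ (Fin m)) (hw : Orthonormal ℂ w)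
    (P : Matrix (Fin m) (Fin m) ℂ) (hP : P.IsHermitian) (hPP : P * P = P)
    (l : ℝ) (hl : 0 < l)
    (hdiag : ∀ i, (⟪w i, (WithLp.toLp 2 (P.mulVec (w i)) : EuclideanSpace ℂ (Fin m))⟫_ℂ).re < 4 / l)
    (hoff : ∀ i j, i ≠ j →
      ‖⟪w i, (WithLp.toLp 2 (P.mulVec (w j)) : EuclideanSpace ℂ (Fin m))⟫_ℂ‖ < 2 / ((d : ℝ) ^ 2 * l)) :
    ∀ v ∈ Submodule.span ℂ (Set.range w), ‖v‖ = 1 →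
      (⟪v, (WithLp.toLp 2 (P.mulVec v) : EuclideanSpace ℂ (Fin m))⟫_ℂ).re < 6 / l := by
  intro v hv hnorm
  obtain ⟨c, rfl⟩ := (Submodule.mem_span_range_iff_exists_fun ℂ).mp hv
  set A : Fin d → Fin d → ℂ :=
    fun i j => ⟪w i, (WithLp.toLp 2 (P.mulVec (w j)) : EuclideanSpace ℂ (Fin m))⟫_ℂ with hA
  -- coefficients have total norm 1
  have hc1 : ∑ i, Complex.normSq (c i) = 1 := by
    have h := hw.inner_sum c c Finset.univ
    have h2 : (⟪(∑ i, c i • w i : EuclideanSpace ℂ (Fin m)), ∑ i, c i • w i⟫_ℂ) = 1 := by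
      rw [@inner_self_eq_norm_sq_to_K ℂ, hnorm]; norm_num
    rw [h2] at h
    have : ((∑ i, Complex.normSq (c i) : ℝ) : ℂ) = 1 := by
      push_cast
      simp_rw [Complex.normSq_eq_conj_mul_self]
      exact h.symm
    exact_mod_cast this
  -- P applied to the combination
  have hPv : (WithLp.toLp 2 (P.mulVec (∑ i, c i • w i : EuclideanSpace ℂ (Fin m))) : EuclideanSpace ℂ (Fin m))
      = ∑ j : Fin d, c j • (WithLp.toLp 2 (P.mulVec (w j)) : EuclideanSpace ℂ (Fin m)) := by
    ext k
    have hsum : ∀ j : Fin m, (∑ x : Fin d, c x • w x : EuclideanSpace ℂ (Fin m)) j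
        = ∑ x : Fin d, c x * w x j := by
      intro j
      simp [Finset.sum_apply]
    simp [Matrix.mulVec, dotProduct, hsum, Finset.sum_apply, Finset.mul_sum]
    rw [Finset.sum_comm]
    congr 1; funext j; congr 1; funext i; ring
  have hexp : ⟪(∑ i, c i • w i : EuclideanSpace ℂ (Fin m)),
      (WithLp.toLp 2 (P.mulVec (∑ i, c i • w i : EuclideanSpace ℂ (Fin m))) : EuclideanSpace ℂ (Fin m))⟫_ℂ
      = ∑ i, ∑ j, (starRingEnd ℂ) (c i) * (c j * A i j) := by
    rw [hPv, inner_sum]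
    simp_rw [inner_smul_right, sum_inner, inner_smul_left, Finset.mul_sum]
    rw [Finset.sum_comm]
    exact Finset.sum_congr rfl fun i _ => Finset.sum_congr rfl fun j _ => by rw [hA]; ring
  rw [hexp]
  rw [Complex.re_sum]
  simp_rw [Complex.re_sum]
  set r : Fin d → Fin d → ℝ := fun i j => ((starRingEnd ℂ) (c i) * (c j * A i j)).re with hr
  have hd0 : 0 < d := by
    rcases Nat.eq_zero_or_pos d with h | h
    · subst h; simp at hc1
    · exact h
  obtain ⟨i0, hi0⟩ : ∃ i, c i ≠ 0 := by
    by_contra h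
    push_neg at h
    simp [h] at hc1
  have habs : ∀ i, ‖c i‖ ≤ 1 := by
    intro i
    have h1 : Complex.normSq (c i) ≤ 1 :=
      hc1 ▸ Finset.single_le_sum (fun j _ => Complex.normSq_nonneg _) (Finset.mem_univ i)
    nlinarith [Complex.sq_norm (c i), norm_nonneg (c i)]
  have hsplit : ∑ i, ∑ j, r i j
      = ∑ i, r i i + ∑ p ∈ (Finset.univ : Finset (Fin d)).offDiag, r p.1 p.2 := by
    rw [← Finset.sum_product', ← Finset.diag_union_offDiag,
      Finset.sum_union (Finset.disjoint_diag_offDiag _), Finset.sum_diag]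
  have hdiagterm : ∀ i, r i i = Complex.normSq (c i) * (A i i).re := by
    intro i
    show ((starRingEnd ℂ) (c i) * (c i * A i i)).re = _
    rw [show (starRingEnd ℂ) (c i) * (c i * A i i)
      = ((Complex.normSq (c i) : ℝ) : ℂ) * A i i by
        rw [Complex.normSq_eq_conj_mul_self]; ring]
    simp [Complex.mul_re]
  have hDsum : ∑ i, r i i < 4 / l := by
    have hlt : ∑ i, r i i < ∑ i, Complex.normSq (c i) * (4 / l) := by
      refine Finset.sum_lt_sum (fun i _ => ?_) ⟨i0, Finset.mem_univ _, ?_⟩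
      · rw [hdiagterm i]
        exact mul_le_mul_of_nonneg_left (hdiag i).le (Complex.normSq_nonneg _)
      · rw [hdiagterm i0]
        exact mul_lt_mul_of_pos_left (hdiag i0) (Complex.normSq_pos.mpr hi0)
    calc ∑ i, r i i < ∑ i, Complex.normSq (c i) * (4 / l) := hlt
      _ = 4 / l := by rw [← Finset.sum_mul, hc1, one_mul]
  have hbound : ∀ p ∈ (Finset.univ : Finset (Fin d)).offDiag,
      r p.1 p.2 ≤ 2 / ((d : ℝ) ^ 2 * l) := by
    intro p hp
    obtain ⟨-, -, hne⟩ := Finset.mem_offDiag.mp hp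
    have h1 : r p.1 p.2 ≤ ‖(starRingEnd ℂ) (c p.1) * (c p.2 * A p.1 p.2)‖ :=
      Complex.re_le_norm _
    have h2 : ‖(starRingEnd ℂ) (c p.1) * (c p.2 * A p.1 p.2)‖
        = ‖c p.1‖ * (‖c p.2‖ * ‖A p.1 p.2‖) := by
      simp [map_mul]
    have h3 : ‖A p.1 p.2‖ ≤ 2 / ((d : ℝ) ^ 2 * l) := (hoff p.1 p.2 hne).le
    calc r p.1 p.2 ≤ ‖c p.1‖ * (‖c p.2‖ * ‖A p.1 p.2‖) :=
          h2 ▸ h1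
      _ ≤ 1 * (1 * ‖A p.1 p.2‖) := by
          gcongr <;> [exact habs p.1; exact habs p.2]
      _ = ‖A p.1 p.2‖ := by ring
      _ ≤ 2 / ((d : ℝ) ^ 2 * l) := h3
  have hOsum : ∑ p ∈ (Finset.univ : Finset (Fin d)).offDiag, r p.1 p.2 ≤ 2 / l := by
    have hcardsum := Finset.sum_le_card_nsmul _ _ _ hbound
    rw [Finset.offDiag_card] at hcardsum
    simp only [Finset.card_univ, Fintype.card_fin, nsmul_eq_mul] at hcardsum
    have hle : ((d * d - d : ℕ) : ℝ) ≤ (d : ℝ) ^ 2 := by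
      have : ((d * d - d : ℕ) : ℝ) ≤ ((d * d : ℕ) : ℝ) := by
        exact_mod_cast Nat.sub_le (d * d) d
      push_cast at this ⊢
      nlinarith
    have hpos : (0 : ℝ) ≤ 2 / ((d : ℝ) ^ 2 * l) := by positivity
    have hdr : (0 : ℝ) < (d : ℝ) := by exact_mod_cast hd0
    calc ∑ p ∈ (Finset.univ : Finset (Fin d)).offDiag, r p.1 p.2
        ≤ ((d * d - d : ℕ) : ℝ) * (2 / ((d : ℝ) ^ 2 * l)) := hcardsum
      _ ≤ (d : ℝ) ^ 2 * (2 / ((d : ℝ) ^ 2 * l)) := mul_le_mul_of_nonneg_right hle hpos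
      _ = 2 / l := by field_simp
  rw [hsplit]
  have : 4 / l + 2 / l = 6 / l := by field_simp; ring
  linarith
end
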